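/- The kernel has a non-zero negative part: for all parameters a > 0, b > 0, λ ∈ (0,2) and every time t > 0, it is not the case that K(t,x) ≥ 0 for all x ∈ ℝ; there exists x ∈ ℝ with K(t,x) < 0. -/

import Mathlib

/-! Write `g = e^{-tψ}`, so that `K(t,·) = 𝓕⁻ g = 𝓕 g` since `g` is even; as `g` is also real,
`K(t,·)` is real. If `𝓕 g` were nonnegative, pairing it with the nonnegative functions
`e^{-‖x‖²/c} (1 - cos 2π⟪v, x⟫)`, whose Fourier transforms are Gaussian approximate identities
at `0` and `±v`, and letting `c → ∞` would give `Re (g v + g (-v)) ≤ 2 g 0`, the bound of a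
positive-definite function by its value at `0`. But `g 0 = 1`, while `ψ < 0` near `0` because
`λ < 2`, so `g v > 1` for small `v > 0`. -/

open MeasureTheory Real
open scoped ComplexOrder

noncomputable section

/-- The Fourier symbol `ψ(ξ) = 4π²aξ² − b|ξ|^λ`. -/
def psi (a b lam ξ : ℝ) : ℝ := 4 * π ^ 2 * a * ξ ^ 2 - b * |ξ| ^ lam

/-- The kernel `K(t,x) = ∫_ℝ e^{2πixξ} e^{−tψ(ξ)} dξ`. -/
def K (a b lam t x : ℝ) : ℂ :=
  ∫ ξ : ℝ, Complex.exp (2 * ↑π * Complex.I * ↑x * ↑ξ) * Complex.exp (-↑(t * psi a b lam ξ))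

open Filter Topology
open scoped FourierTransform RealInnerProductSpace ComplexConjugate

section Fourier

variable {V : Type*} [NormedAddCommGroup V] [InnerProductSpace ℝ V]

def modulatedGaussian (c : ℝ) (w x : V) : ℂ :=
  Complex.exp (-(c⁻¹ : ℂ) * ‖x‖ ^ 2 + 2 * π * Complex.I * ⟪w, x⟫)

theorem modulatedGaussian_sub_avg (c : ℝ) (v x : V) :
    modulatedGaussian c 0 x - (modulatedGaussian c v x + modulatedGaussian c (-v) x) / 2 =
      ((rexp (-c⁻¹ * ‖x‖ ^ 2) * (1 - Real.cos (2 * π * ⟪v, x⟫)) : ℝ) : ℂ) := by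
  simp only [modulatedGaussian, inner_zero_left, inner_neg_left, Complex.ofReal_zero,
    Complex.ofReal_neg, mul_zero, add_zero, Complex.exp_add, Complex.ofReal_mul,
    Complex.ofReal_exp, Complex.ofReal_sub, Complex.ofReal_cos, Complex.cos]
  push_cast
  ring_nf

variable [MeasurableSpace V] [BorelSpace V] [FiniteDimensional ℝ V]

theorem integrable_modulatedGaussian {c : ℝ} (hc : 0 < c) (w : V) :
    Integrable (modulatedGaussian c w) :=
  GaussianFourier.integrable_cexp_neg_mul_sq_norm_add (by simpa using hc) _ w

theorem tendsto_integral_modulatedGaussian_smul_fourier {E : Type*} [NormedAddCommGroup E]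
    [NormedSpace ℂ E] [CompleteSpace E] {f : V → E} (hf : Integrable f) {v : V}
    (hv : ContinuousAt f v) :
    Tendsto (fun c : ℝ ↦ ∫ x : V, modulatedGaussian c v x • 𝓕 f x) atTop (𝓝 (f v)) := by
  refine (Real.tendsto_integral_gaussian_smul' hf hv).congr' ?_
  filter_upwards [Ioi_mem_atTop 0] with c (hc : 0 < c)
  have hswap := VectorFourier.integral_fourierIntegral_smul_eq_flip (L := innerₗ V)
      Real.continuous_fourierChar continuous_inner (integrable_modulatedGaussian hc v) hf
  rw [flip_innerₗ] at hswap
  refine Eq.trans ?_ hswap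
  congr with w
  change _ = 𝓕 (modulatedGaussian c v) w • f w
  unfold modulatedGaussian
  rw [fourier_gaussian_innerProductSpace' (by simpa using hc)]
  congr 2
  · rw [div_inv_eq_mul]
  · rw [div_inv_eq_mul]
    exact congrArg _ (mul_right_comm _ _ _)

theorem re_add_le_of_fourier_re_nonneg {f : V → ℂ} (hf : Integrable f) (hcont : Continuous f)
    (hF : ∀ x, 0 ≤ (𝓕 f x).re) (v : V) : (f v + f (-v)).re ≤ 2 * (f 0).re := by
  set T : ℝ → V → ℂ := fun c w ↦ ∫ x : V, modulatedGaussian c w x • 𝓕 f x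
  have hlim : Tendsto (fun c ↦ (T c 0 - (T c v + T c (-v)) / 2).re) atTop
      (𝓝 (f 0 - (f v + f (-v)) / 2).re) := by
    have h := fun w ↦
      tendsto_integral_modulatedGaussian_smul_fourier hf (hcont.continuousAt (x := w))
    exact (Complex.continuous_re.tendsto _).comp ((h 0).sub (((h v).add (h (-v))).div_const 2))
  have hpos : ∀ᶠ c in atTop, 0 ≤ (T c 0 - (T c v + T c (-v)) / 2).re := by
    filter_upwards [Ioi_mem_atTop 0] with c (hc : 0 < c)
    have hFc : Continuous (𝓕 f) :=
      VectorFourier.fourierIntegral_continuous Real.continuous_fourierChar continuous_inner hf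
    have hint : ∀ w, Integrable fun x : V ↦ modulatedGaussian c w x • 𝓕 f x := fun w ↦
      (integrable_modulatedGaussian hc w).smul_bdd (∫ x, ‖f x‖) hFc.aestronglyMeasurable
        (ae_of_all _ fun x ↦ VectorFourier.norm_fourierIntegral_le_integral_norm _ _ _ _ _)
    have hpt : ∀ x : V, modulatedGaussian c 0 x • 𝓕 f x -
        (modulatedGaussian c v x • 𝓕 f x + modulatedGaussian c (-v) x • 𝓕 f x) / 2 =
        ((rexp (-c⁻¹ * ‖x‖ ^ 2) * (1 - Real.cos (2 * π * ⟪v, x⟫)) : ℝ) : ℂ) * 𝓕 f x := by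
      intro x
      simp only [← modulatedGaussian_sub_avg, smul_eq_mul]
      ring
    have hint2 : Integrable fun x : V ↦
        (modulatedGaussian c v x • 𝓕 f x + modulatedGaussian c (-v) x • 𝓕 f x) / 2 :=
      ((hint v).add (hint (-v))).div_const 2
    have hT : T c 0 - (T c v + T c (-v)) / 2 =
        ∫ x, ((rexp (-c⁻¹ * ‖x‖ ^ 2) * (1 - Real.cos (2 * π * ⟪v, x⟫)) : ℝ) : ℂ) * 𝓕 f x := by
      simp_rw [← hpt]
      rw [integral_sub (hint 0) hint2, integral_div, integral_add (hint v) (hint (-v))]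
    have hg := ((hint 0).sub hint2).congr (ae_of_all _ hpt)
    rw [hT, ← RCLike.re_to_complex, ← integral_re hg]
    refine integral_nonneg fun x ↦ ?_
    rw [RCLike.re_to_complex, Complex.re_ofReal_mul]
    have := Real.cos_le_one (2 * π * ⟪v, x⟫)
    exact mul_nonneg (mul_nonneg (Real.exp_pos _).le (by linarith)) (hF x)
  have hlimit := ge_of_tendsto hlim hpos
  rw [Complex.sub_re, Complex.div_ofNat_re] at hlimit
  linarith

theorem fourierInv_eq_fourier_of_even {E : Type*} [NormedAddCommGroup E] [NormedSpace ℂ E]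
    {f : V → E} (hf : ∀ x, f (-x) = f x) : 𝓕⁻ f = 𝓕 f := by
  simp only [fourierInv_eq_fourier_comp_neg, hf]

theorem conj_fourier_ofReal (g : V → ℝ) (w : V) :
    conj (𝓕 (fun x ↦ (g x : ℂ)) w) = 𝓕⁻ (fun x ↦ (g x : ℂ)) w := by
  rw [fourier_eq, fourierInv_eq, ← integral_conj]
  congr with x
  simp [Circle.smul_def, ← Circle.coe_inv_eq_conj, AddChar.map_neg_eq_inv]

end Fourier

theorem exists_abs_rpow_le_mul_sq_add {lam ε : ℝ} (hlam0 : 0 ≤ lam) (hlam2 : lam < 2)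
    (hε : 0 < ε) : ∃ C, ∀ ξ : ℝ, |ξ| ^ lam ≤ ε * ξ ^ 2 + C := by
  obtain ⟨R, hRε, hR⟩ := (((tendsto_rpow_neg_atTop (sub_pos.2 hlam2)).eventually
    (gt_mem_nhds hε)).and (Ioi_mem_atTop 0)).exists
  rw [neg_sub] at hRε
  refine ⟨R ^ lam, fun ξ ↦ ?_⟩
  rcases le_or_gt |ξ| R with hξ | hξ
  · have := Real.rpow_le_rpow (abs_nonneg ξ) hξ hlam0
    nlinarith [sq_nonneg ξ]
  · have hξ0 : 0 < |ξ| := (Set.mem_Ioi.1 hR).trans hξ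
    calc |ξ| ^ lam = |ξ| ^ (lam - 2) * ξ ^ 2 := by
          rw [← sq_abs, ← Real.rpow_two, ← Real.rpow_add hξ0, sub_add_cancel]
      _ ≤ ε * ξ ^ 2 := by
          gcongr
          exact (Real.rpow_le_rpow_of_nonpos hR hξ.le (by linarith)).trans hRε.le
      _ ≤ ε * ξ ^ 2 + R ^ lam := le_add_of_nonneg_right (by positivity)

theorem psi_neg (a b lam ξ : ℝ) : psi a b lam (-ξ) = psi a b lam ξ := by
  simp [psi]

theorem psi_zero (a b : ℝ) {lam : ℝ} (hlam : lam ≠ 0) : psi a b lam 0 = 0 := by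
  simp [psi, Real.zero_rpow hlam]

theorem continuous_psi (a b : ℝ) {lam : ℝ} (hlam : 0 ≤ lam) : Continuous (psi a b lam) := by
  unfold psi
  fun_prop (disch := exact fun _ ↦ Or.inr hlam)

theorem exists_psi_neg (a : ℝ) {b lam : ℝ} (hb : 0 < b) (hlam : lam < 2) :
    ∃ ξ, psi a b lam ξ < 0 := by
  have hsmall : Tendsto (fun ξ : ℝ ↦ 4 * π ^ 2 * a * ξ ^ (2 - lam)) (𝓝[>] 0) (𝓝 0) := by
    have := ((Real.continuous_rpow_const (sub_pos.2 hlam).le).tendsto 0).const_mul (4 * π ^ 2 * a)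
    rw [Real.zero_rpow (sub_pos.2 hlam).ne', mul_zero] at this
    exact this.mono_left nhdsWithin_le_nhds
  obtain ⟨ξ, hξb, hξ⟩ := ((hsmall.eventually (gt_mem_nhds hb)).and self_mem_nhdsWithin).exists
  refine ⟨ξ, ?_⟩
  have hξ0 : 0 < ξ := hξ
  have hsplit : psi a b lam ξ = ξ ^ lam * (4 * π ^ 2 * a * ξ ^ (2 - lam) - b) := by
    have hsq : ξ ^ 2 = ξ ^ lam * ξ ^ (2 - lam) := by
      rw [← Real.rpow_add hξ0, add_sub_cancel, Real.rpow_two]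
    rw [psi, abs_of_pos hξ0, hsq]
    ring
  rw [hsplit]
  exact mul_neg_of_pos_of_neg (Real.rpow_pos_of_pos hξ0 _) (by linarith)

theorem integrable_exp_neg_mul_psi {a b lam t : ℝ} (ha : 0 < a) (hb : 0 < b) (hlam0 : 0 ≤ lam)
    (hlam2 : lam < 2) (ht : 0 < t) : Integrable fun ξ ↦ rexp (-(t * psi a b lam ξ)) := by
  obtain ⟨C, hC⟩ :=
    exists_abs_rpow_le_mul_sq_add hlam0 hlam2 (by positivity : 0 < 2 * π ^ 2 * a / b)
  refine ((integrable_exp_neg_mul_sq (by positivity : 0 < 2 * π ^ 2 * a * t)).const_mul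
    (rexp (t * b * C))).mono' (by have := continuous_psi a b hlam0; fun_prop)
    (ae_of_all _ fun ξ ↦ ?_)
  rw [Real.norm_of_nonneg (Real.exp_pos _).le, ← Real.exp_add]
  gcongr
  have := mul_le_mul_of_nonneg_left (hC ξ) (mul_nonneg ht.le hb.le)
  have hε : t * b * (2 * π ^ 2 * a / b) = 2 * π ^ 2 * a * t := by field_simp
  simp only [psi]
  nlinarith

theorem K_eq_fourierInv (a b lam t : ℝ) :
    K a b lam t = 𝓕⁻ (fun ξ : ℝ ↦ (rexp (-(t * psi a b lam ξ)) : ℂ)) := by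
  ext x
  rw [fourierInv_eq', K]
  congr with ξ
  rw [smul_eq_mul, Complex.ofReal_exp, Complex.ofReal_neg]
  congr 2
  simp only [inner_apply]
  push_cast
  ring

theorem K_eq_fourier (a b lam t : ℝ) :
    K a b lam t = 𝓕 (fun ξ : ℝ ↦ (rexp (-(t * psi a b lam ξ)) : ℂ)) := by
  rw [K_eq_fourierInv, fourierInv_eq_fourier_of_even fun ξ ↦ by rw [psi_neg]]

theorem K_im (a b lam t x : ℝ) : (K a b lam t x).im = 0 := by
  rw [← Complex.conj_eq_iff_im, K_eq_fourier, conj_fourier_ofReal,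
    fourierInv_eq_fourier_of_even fun ξ ↦ by rw [psi_neg]]

/-- The kernel has a non-zero negative part: it is not everywhere nonnegative, and
there is a point where it is negative (with respect to the order on `ℂ`; the kernel
is in fact real-valued). -/
theorem kernel_has_negative_part
    (a b lam : ℝ) (ha : 0 < a) (hb : 0 < b) (hlam : lam ∈ Set.Ioo (0 : ℝ) 2)
    (t : ℝ) (ht : 0 < t) :
    ¬ (∀ x : ℝ, 0 ≤ K a b lam t x) ∧ ∃ x : ℝ, K a b lam t x < 0 := by
  obtain ⟨hlam0, hlam2⟩ := hlam
  obtain ⟨x, hx⟩ : ∃ x, (K a b lam t x).re < 0 := by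
    by_contra! hK_nonneg
    obtain ⟨ξ₀, hξ₀⟩ := exists_psi_neg a hb hlam2
    have hbound := re_add_le_of_fourier_re_nonneg
      (f := fun ξ : ℝ ↦ (rexp (-(t * psi a b lam ξ)) : ℂ))
      (integrable_exp_neg_mul_psi ha hb hlam0.le hlam2 ht).ofReal
      (by have := continuous_psi a b hlam0.le; fun_prop)
      (fun x ↦ by simpa only [K_eq_fourier] using hK_nonneg x) ξ₀
    rw [psi_neg, psi_zero a b hlam0.ne', mul_zero, neg_zero, Real.exp_zero, Complex.add_re,
      Complex.ofReal_re, Complex.ofReal_one, Complex.one_re] at hbound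
    have := Real.one_lt_exp_iff.2 (neg_pos.2 (mul_neg_of_pos_of_neg ht hξ₀))
    linarith
  have hneg : K a b lam t x < 0 := Complex.lt_def.2 ⟨hx, K_im a b lam t x⟩
  exact ⟨fun h ↦ (h x).not_gt hneg, x, hneg⟩
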